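/- arXiv:2505.13815 — 3 statements merged into one kernel-verified Lean document; each statement's English description precedes it below -/
import Mathlib

section
/- Combining the previous two: if A is an event with Pr(A) ≤ δ < 1/8 and E[μ̂ | Aᶜ] = μ, and μ̂^{(r)} is the sample median of 2r−1 i.i.d. copies of μ̂, then Pr(|μ̂^{(r)} − μ|² > δ⁻¹ Pr(Aᶜ) Var(μ̂ | Aᶜ)) ≤ (8δ)^r. -/
open MeasureTheory ProbabilityTheory

/-- Lemma 2 of the paper: if `A` is an event with `Pr(A) ≤ δ < 1/8` and
`E[μ̂ | Aᶜ] = μ₀` where `μ̂ = X`, and `μ̂^{(r)} = M` is the sample median of `2r−1` i.i.d.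
copies `Y i` of `X`, then `Pr(|M − μ₀|² > δ⁻¹ Pr(Aᶜ) Var(X | Aᶜ)) ≤ (8δ)ʳ`. -/
theorem stmt11 {Ω Ω' : Type*} [MeasurableSpace Ω] [MeasurableSpace Ω']
    (μ : Measure Ω) [IsProbabilityMeasure μ] (μ' : Measure Ω') [IsProbabilityMeasure μ']
    (A : Set Ω) (hA : MeasurableSet A) (X : Ω → ℝ) (hX : Measurable X)
    (δ : ℝ) (hδ0 : 0 < δ) (hδ : δ < 1 / 8) (hPA : μ A ≤ ENNReal.ofReal δ)
    (μ₀ : ℝ) (hmean : ∫ ω, X ω ∂(μ[|Aᶜ]) = μ₀)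
    (hL2 : MemLp X 2 (μ[|Aᶜ]))
    (r : ℕ) (hr : 1 ≤ r) (Y : Fin (2 * r - 1) → Ω' → ℝ)
    (hYmeas : ∀ i, Measurable (Y i))
    (hindep : iIndepFun Y μ')
    (hident : ∀ i, IdentDistrib (Y i) X μ' μ)
    (M : Ω' → ℝ)
    (hM : ∀ ω, r ≤ (Finset.univ.filter fun i => Y i ω ≤ M ω).card ∧
               r ≤ (Finset.univ.filter fun i => M ω ≤ Y i ω).card) :
    μ' {ω | δ⁻¹ * (μ Aᶜ).toReal * variance X (μ[|Aᶜ]) < (M ω - μ₀) ^ 2}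
      ≤ ENNReal.ofReal ((8 * δ) ^ r) := by
  set ν := μ[|Aᶜ] with hν
  set p := (μ Aᶜ).toReal with hp
  set V := variance X ν with hV
  set c := δ⁻¹ * p * V with hc
  have hδ1 : δ < 1 := by linarith
  have hAlt : μ A < 1 := lt_of_le_of_lt hPA (by rw [ENNReal.ofReal_lt_one]; linarith)
  have hAc : MeasurableSet Aᶜ := hA.compl
  have hAcne : μ Aᶜ ≠ 0 := by
    rw [prob_compl_eq_one_sub hA]
    simpa using (tsub_pos_of_lt hAlt).ne'
  have hAcfin : μ Aᶜ ≠ ⊤ := measure_ne_top μ Aᶜ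
  have hppos : 0 < p := ENNReal.toReal_pos hAcne hAcfin
  haveI : IsProbabilityMeasure ν := cond_isProbabilityMeasure hAcne
  have hcnonneg : 0 ≤ c := by
    have := variance_nonneg X ν
    have : 0 ≤ V := this
    positivity
  -- the bad set in ℝ
  set s : Set ℝ := {x | c < (x - μ₀) ^ 2} with hs
  have hsm : MeasurableSet s := by
    apply measurableSet_lt measurable_const
    fun_prop
  -- Chebyshev bound on conditional measure
  have hcheb : ν (X ⁻¹' s) ≤ ENNReal.ofReal (δ / p) := by
    rcases eq_or_lt_of_le (variance_nonneg X ν) with hV0 | hVpos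
    · -- variance zero: X = μ₀ a.e.
      have hc0 : c = 0 := by rw [hc, hV, ← hV0]; ring
      have hInt : Integrable (fun x => (X x - μ₀) ^ 2) ν :=
        (hL2.sub (memLp_const μ₀)).integrable_sq
      have hvar : ∫ x, (X x - μ₀) ^ 2 ∂ν = 0 := by
        have := variance_eq_integral hX.aemeasurable (μ := ν)
        rw [hmean] at this
        rw [← this, ← hV0]
      have hae : ∀ᵐ x ∂ν, X x = μ₀ := by
        have h0 := (integral_eq_zero_iff_of_nonneg (fun x => sq_nonneg _) hInt).1 hvar
        filter_upwards [h0] with x hx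
        have : X x - μ₀ = 0 := by
          simpa using pow_eq_zero_iff (n := 2) (by norm_num) |>.1 hx
        linarith
      have hzero : ν {x | X x ≠ μ₀} = 0 := by
        have := ae_iff.1 hae
        simpa using this
      have hsub0 : X ⁻¹' s ⊆ {x | X x ≠ μ₀} := by
        intro x hx
        simp only [Set.mem_preimage, hs, Set.mem_setOf_eq, hc0] at hx
        intro hxe
        rw [hxe] at hx
        simp at hx
      have : ν (X ⁻¹' s) = 0 := le_antisymm ((measure_mono hsub0).trans hzero.le) zero_le
      simp [this]
    · have hcpos : 0 < c := by
        rw [hc]; positivity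
      set q := Real.sqrt c with hq
      have hqpos : 0 < q := Real.sqrt_pos.2 hcpos
      have hsub : X ⁻¹' s ⊆ {x | q ≤ |X x - μ₀|} := by
        intro x hx
        simp only [Set.mem_preimage, hs, Set.mem_setOf_eq] at hx
        have : q < |X x - μ₀| := by
          have := Real.sqrt_lt_sqrt hcnonneg hx
          rwa [Real.sqrt_sq_eq_abs] at this
        exact this.le
      calc ν (X ⁻¹' s) ≤ ν {x | q ≤ |X x - μ₀|} := measure_mono hsub
        _ ≤ ENNReal.ofReal (V / q ^ 2) := by
            have := meas_ge_le_variance_div_sq (μ := ν) hL2 hqpos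
            rwa [hmean] at this
        _ = ENNReal.ofReal (δ / p) := by
            congr 1
            rw [Real.sq_sqrt hcnonneg, hc]
            have hVne : V ≠ 0 := hVpos.ne'
            field_simp
  -- single copy bound
  have hone : μ (X ⁻¹' s) ≤ ENNReal.ofReal (2 * δ) := by
    have hsplit : X ⁻¹' s ⊆ A ∪ (Aᶜ ∩ X ⁻¹' s) := by
      intro x hx
      by_cases hxA : x ∈ A
      · exact Or.inl hxA
      · exact Or.inr ⟨hxA, hx⟩
    have hcond : μ (Aᶜ ∩ X ⁻¹' s) = μ Aᶜ * ν (X ⁻¹' s) := by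
      rw [hν, cond_apply hAc, ← mul_assoc, ENNReal.mul_inv_cancel hAcne hAcfin, one_mul]
    calc μ (X ⁻¹' s) ≤ μ A + μ (Aᶜ ∩ X ⁻¹' s) := (measure_mono hsplit).trans (measure_union_le _ _)
      _ ≤ ENNReal.ofReal δ + ENNReal.ofReal δ := by
          refine add_le_add hPA ?_
          rw [hcond]
          calc μ Aᶜ * ν (X ⁻¹' s) ≤ ENNReal.ofReal p * ENNReal.ofReal (δ / p) := by
                refine mul_le_mul' ?_ hcheb
                rw [hp, ENNReal.ofReal_toReal hAcfin]
            _ = ENNReal.ofReal δ := by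
                rw [← ENNReal.ofReal_mul hppos.le]
                congr 1
                field_simp
      _ = ENNReal.ofReal (2 * δ) := by rw [← ENNReal.ofReal_add hδ0.le hδ0.le]; ring_nf
  -- each copy
  have hcopy : ∀ i, μ' (Y i ⁻¹' s) ≤ ENNReal.ofReal (2 * δ) := fun i => by
    rw [(hident i).measure_mem_eq hsm]; exact hone
  -- median failure implies ≥ r copies fail
  have hsubset : {ω | c < (M ω - μ₀) ^ 2} ⊆
      ⋃ S ∈ Finset.powersetCard r (Finset.univ : Finset (Fin (2 * r - 1))),
        ⋂ i ∈ S, Y i ⁻¹' s := by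
    intro ω hω
    simp only [Set.mem_setOf_eq] at hω
    set q := Real.sqrt c with hq
    have hqc : q ^ 2 = c := Real.sq_sqrt hcnonneg
    have hqnn : 0 ≤ q := Real.sqrt_nonneg _
    have habs : q < |M ω - μ₀| := by
      have := Real.sqrt_lt_sqrt hcnonneg hω
      rwa [Real.sqrt_sq_eq_abs] at this
    obtain ⟨F, hFcard, hFbad⟩ :
        ∃ F : Finset (Fin (2 * r - 1)), r ≤ F.card ∧ ∀ i ∈ F, ω ∈ Y i ⁻¹' s := by
      rcases le_or_gt μ₀ (M ω) with hge | hlt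
      · refine ⟨Finset.univ.filter fun i => M ω ≤ Y i ω, (hM ω).2, fun i hi => ?_⟩
        simp only [Finset.mem_filter] at hi
        have h1 : q < M ω - μ₀ := by
          rwa [abs_of_nonneg (by linarith)] at habs
        have h2 : q < Y i ω - μ₀ := by linarith [hi.2]
        simp only [Set.mem_preimage, hs, Set.mem_setOf_eq]
        nlinarith
      · refine ⟨Finset.univ.filter fun i => Y i ω ≤ M ω, (hM ω).1, fun i hi => ?_⟩
        simp only [Finset.mem_filter] at hi
        have h1 : q < μ₀ - M ω := by
          rw [abs_of_neg (by linarith)] at habs; linarith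
        have h2 : q < μ₀ - Y i ω := by linarith [hi.2]
        simp only [Set.mem_preimage, hs, Set.mem_setOf_eq]
        nlinarith
    obtain ⟨S, hSF, hScard⟩ := Finset.exists_subset_card_eq hFcard
    exact Set.mem_iUnion₂.2 ⟨S, Finset.mem_powersetCard.2 ⟨Finset.subset_univ S, hScard⟩,
      Set.mem_biInter fun i hi => hFbad i (hSF hi)⟩
  -- combine
  calc μ' {ω | c < (M ω - μ₀) ^ 2}
      ≤ μ' (⋃ S ∈ Finset.powersetCard r (Finset.univ : Finset (Fin (2 * r - 1))),
          ⋂ i ∈ S, Y i ⁻¹' s) := measure_mono hsubset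
    _ ≤ ∑ S ∈ Finset.powersetCard r (Finset.univ : Finset (Fin (2 * r - 1))),
          μ' (⋂ i ∈ S, Y i ⁻¹' s) := measure_biUnion_finset_le _ _
    _ ≤ ∑ S ∈ Finset.powersetCard r (Finset.univ : Finset (Fin (2 * r - 1))),
          ENNReal.ofReal (2 * δ) ^ r := by
        refine Finset.sum_le_sum fun S hS => ?_
        rw [Finset.mem_powersetCard] at hS
        rw [hindep.meas_biInter (fun i _ => ⟨s, hsm, rfl⟩)]
        calc ∏ i ∈ S, μ' (Y i ⁻¹' s) ≤ ∏ i ∈ S, ENNReal.ofReal (2 * δ) :=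
              Finset.prod_le_prod' fun i _ => hcopy i
          _ = ENNReal.ofReal (2 * δ) ^ r := by rw [Finset.prod_const, hS.2]
    _ = (Nat.choose (2 * r - 1) r : ENNReal) * ENNReal.ofReal (2 * δ) ^ r := by
        rw [Finset.sum_const, Finset.card_powersetCard, Finset.card_univ, Fintype.card_fin,
          nsmul_eq_mul]
    _ ≤ ENNReal.ofReal ((8 * δ) ^ r) := by
        rw [← ENNReal.ofReal_pow (by linarith), ← ENNReal.ofReal_natCast,
          ← ENNReal.ofReal_mul (by positivity)]
        refine ENNReal.ofReal_le_ofReal ?_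
        have h1 : Nat.choose (2 * r - 1) r ≤ 2 ^ (2 * r - 1) := by
          calc Nat.choose (2 * r - 1) r
              ≤ ∑ i ∈ Finset.range (2 * r - 1 + 1), Nat.choose (2 * r - 1) i :=
                Finset.single_le_sum (fun i _ => Nat.zero_le _)
                  (Finset.mem_range.2 (by omega))
            _ = 2 ^ (2 * r - 1) := Nat.sum_range_choose _
        have h2 : (Nat.choose (2 * r - 1) r : ℝ) ≤ 4 ^ r := by
          have h3 : Nat.choose (2 * r - 1) r ≤ 4 ^ r := by
            refine h1.trans ?_
            calc 2 ^ (2 * r - 1) ≤ 2 ^ (2 * r) := Nat.pow_le_pow_right (by norm_num) (by omega)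
              _ = 4 ^ r := by norm_num [pow_mul]
          exact_mod_cast h3
        calc (Nat.choose (2 * r - 1) r : ℝ) * (2 * δ) ^ r
            ≤ 4 ^ r * (2 * δ) ^ r := by
              refine mul_le_mul_of_nonneg_right h2 (by positivity)
          _ = (8 * δ) ^ r := by rw [← mul_pow]; ring_nf
end

section
/- Suppose γ_j ≥ 0 for j ∈ ℕ with ∑_{j=1}^∞ γ_j ≤ C_∞ < ∞, and let A, B ≥ 0. Then for every s and every m ∈ ℕ, the product ∏_{j=1}^s (1 + γ_j(Am + B)) is bounded, for every η > 0, by C'_η · 2^{ηm} for a constant C'_η depending only on η, A, B, C_∞ (and not on s or m). -/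
private lemma one_le_prod_real {f : ℕ → ℝ} (S : Finset ℕ) (h : ∀ j ∈ S, 1 ≤ f j) :
    (1:ℝ) ≤ ∏ j ∈ S, f j :=
  le_of_eq_of_le (by simp) (Finset.prod_le_prod (fun _ _ => zero_le_one) h)

private lemma prod_mono_range {f : ℕ → ℝ} (hf : ∀ j, 1 ≤ f j) {a b : ℕ} (hab : a ≤ b) :
    ∏ j ∈ Finset.range a, f j ≤ ∏ j ∈ Finset.range b, f j := by
  obtain ⟨t, rfl⟩ := Nat.exists_eq_add_of_le hab
  rw [Finset.prod_range_add]
  have h1 : (1:ℝ) ≤ ∏ j ∈ Finset.range t, f (a + j) :=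
    one_le_prod_real _ fun j _ => hf _
  have h0 : (0:ℝ) ≤ ∏ j ∈ Finset.range a, f j :=
    Finset.prod_nonneg fun j _ => le_trans zero_le_one (hf j)
  nlinarith

/-- dimension-independent polynomial-growth bound: if `γ_j ≥ 0` with
`∑_{j} γ_j ≤ Cinf < ∞` and `A, B ≥ 0`, then for every `η > 0` there is a constant `C'`
(independent of `s` and `m`) such that `∏_{j=1}^s (1 + γ_j(Am + B)) ≤ C'·2^{ηm}`
for all `s` and all `m ≥ 1`. -/
theorem stmt13 (γ : ℕ → ℝ) (hγ : ∀ j, 0 ≤ γ j) (Cinf A B : ℝ) (hA : 0 ≤ A) (hB : 0 ≤ B)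
    (hsum : Summable γ) (hC : ∑' j, γ j ≤ Cinf) :
    ∀ η > (0:ℝ), ∃ C' > (0:ℝ), ∀ s m : ℕ, 1 ≤ m →
      ∏ j ∈ Finset.range s, (1 + γ j * (A * m + B)) ≤ C' * (2:ℝ) ^ (η * m) := by
  intro η hη
  set L : ℝ := Real.log 2 with hLdef
  have hL : 0 < L := Real.log_pos (by norm_num)
  set ε : ℝ := η * L / (2 * (A + B + 1)) with hεdef
  have hAB1 : 0 < A + B + 1 := by linarith
  have hε : 0 < ε := by
    apply div_pos (by positivity) (by positivity)
  -- choose N so that the tail sum is ≤ ε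
  obtain ⟨N, hN⟩ : ∃ N, ∑' k, γ (k + N) ≤ ε := by
    have := tendsto_sum_nat_add γ
    have h := (this.eventually (eventually_le_nhds hε)).exists
    obtain ⟨N, hN⟩ := h
    exact ⟨N, hN⟩
  set K : ℝ := ∏ j ∈ Finset.range N, (1 + γ j * (A + B + 1)) with hKdef
  have hK1 : (1:ℝ) ≤ K := one_le_prod_real _ fun j _ => by
    have := hγ j; nlinarith
  have hK0 : 0 < K := lt_of_lt_of_le zero_lt_one hK1
  set δ : ℝ := η * L / 2 with hδdef
  have hδ : 0 < δ := by positivity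
  refine ⟨K * ((N.factorial : ℝ) / δ ^ N), by positivity, ?_⟩
  intro s m hm
  have hm1 : (1:ℝ) ≤ (m:ℝ) := by exact_mod_cast hm
  set x : ℝ := A * m + B with hxdef
  have hx0 : 0 ≤ x := by positivity
  have hxm : x ≤ (A + B + 1) * m := by nlinarith
  have hfac : ∀ j, (1:ℝ) ≤ 1 + γ j * x := fun j => by nlinarith [hγ j, mul_nonneg (hγ j) hx0]
  set t : ℕ := max s N with htdef
  have h1 : ∏ j ∈ Finset.range s, (1 + γ j * x) ≤ ∏ j ∈ Finset.range t, (1 + γ j * x) :=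
    prod_mono_range hfac (le_max_left _ _)
  obtain ⟨r, hr⟩ : ∃ r, t = N + r := Nat.exists_eq_add_of_le (le_max_right _ _)
  -- Part 1: head product ≤ K * m^N
  have part1 : ∏ j ∈ Finset.range N, (1 + γ j * x) ≤ K * (m:ℝ) ^ N := by
    have : ∀ j ∈ Finset.range N, (1 + γ j * x) ≤ (1 + γ j * (A + B + 1)) * m := by
      intro j _
      have hgj := hγ j
      have : γ j * x ≤ γ j * ((A + B + 1) * m) := by
        exact mul_le_mul_of_nonneg_left hxm hgj
      nlinarith
    calc ∏ j ∈ Finset.range N, (1 + γ j * x)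
        ≤ ∏ j ∈ Finset.range N, ((1 + γ j * (A + B + 1)) * m) :=
          Finset.prod_le_prod (fun j _ => le_trans zero_le_one (hfac j)) this
      _ = K * (m:ℝ) ^ N := by
          rw [Finset.prod_mul_distrib, Finset.prod_const, hKdef]
          simp [Finset.card_range]
  -- Part 2: tail product ≤ exp (δ * m)
  have hsum' : Summable fun k => γ (k + N) := (summable_nat_add_iff N).2 hsum
  have part2 : ∏ j ∈ Finset.range r, (1 + γ (N + j) * x) ≤ Real.exp (δ * m) := by
    have step : ∏ j ∈ Finset.range r, (1 + γ (N + j) * x)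
        ≤ ∏ j ∈ Finset.range r, Real.exp (γ (N + j) * x) :=
      Finset.prod_le_prod (fun j _ => le_trans zero_le_one (hfac _))
        (fun j _ => by linarith [Real.add_one_le_exp (γ (N + j) * x)])
    rw [← Real.exp_sum] at step
    refine step.trans (Real.exp_le_exp.2 ?_)
    rw [← Finset.sum_mul]
    have hsb : ∑ j ∈ Finset.range r, γ (N + j) ≤ ε := by
      have : ∑ j ∈ Finset.range r, γ (N + j) ≤ ∑' k, γ (k + N) := by
        have := Summable.sum_le_tsum (f := fun k => γ (k + N)) (Finset.range r) (fun k _ => hγ _) hsum'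
        simpa [Nat.add_comm] using this
      exact this.trans hN
    have hxx : (∑ j ∈ Finset.range r, γ (N + j)) * x ≤ ε * ((A + B + 1) * m) := by
      apply mul_le_mul hsb hxm hx0 hε.le
    refine hxx.trans (le_of_eq ?_)
    rw [hεdef, hδdef]
    field_simp
  -- Part 3: m^N ≤ (N! / δ^N) * exp (δ * m)
  have part3 : (m:ℝ) ^ N ≤ ((N.factorial : ℝ) / δ ^ N) * Real.exp (δ * m) := by
    have h := Real.pow_div_factorial_le_exp (x := δ * m) (by positivity) N
    have hfN : (0:ℝ) < (N.factorial : ℝ) := by exact_mod_cast N.factorial_pos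
    rw [div_le_iff₀ hfN] at h
    have : (δ * m) ^ N = δ ^ N * (m:ℝ) ^ N := by rw [mul_pow]
    rw [this] at h
    rw [div_mul_eq_mul_div, le_div_iff₀ (by positivity)]
    nlinarith [Real.exp_pos (δ * m)]
  -- combine
  have hexp : Real.exp (δ * m) * Real.exp (δ * m) = (2:ℝ) ^ (η * m) := by
    rw [← Real.exp_add, Real.rpow_def_of_pos (by norm_num : (0:ℝ) < 2)]
    congr 1
    rw [hδdef, hLdef]
    ring
  have hprodN0 : 0 ≤ ∏ j ∈ Finset.range N, (1 + γ j * x) :=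
    Finset.prod_nonneg fun j _ => le_trans zero_le_one (hfac j)
  have hprodr0 : 0 ≤ ∏ j ∈ Finset.range r, (1 + γ (N + j) * x) :=
    Finset.prod_nonneg fun j _ => le_trans zero_le_one (hfac _)
  calc ∏ j ∈ Finset.range s, (1 + γ j * x)
      ≤ (∏ j ∈ Finset.range N, (1 + γ j * x)) * ∏ j ∈ Finset.range r, (1 + γ (N + j) * x) := by
        rw [hr, Finset.prod_range_add] at h1; exact h1
    _ ≤ (K * (m:ℝ) ^ N) * Real.exp (δ * m) := by
        apply mul_le_mul part1 part2 hprodr0 (by positivity)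
    _ ≤ (K * (((N.factorial : ℝ) / δ ^ N) * Real.exp (δ * m))) * Real.exp (δ * m) := by
        have := mul_le_mul_of_nonneg_left part3 hK0.le
        exact mul_le_mul_of_nonneg_right this (Real.exp_pos _).le
    _ = K * ((N.factorial : ℝ) / δ ^ N) * (Real.exp (δ * m) * Real.exp (δ * m)) := by ring
    _ = K * ((N.factorial : ℝ) / δ ^ N) * (2:ℝ) ^ (η * m) := by rw [hexp]
end

section
/- Let α ∈ ℕ₀, λ ∈ (0,1], A = 1/(α!(2^{1/(α+λ)}−1)^α) and B = ∑_{α'=1}^α 1/(α'!(2^{1/(α+λ)}−1)^{α'}). Then for every T ≥ 0 and every nonempty u ⊆ {1,...,s}, the cardinality of K_u(T) (defined below) is at most 2^{T/(α+λ)} (A·max(T/(α+λ),1) + B)^{|u|}. -/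
/-- The set `κ` of (0-indexed) positions of nonzero binary digits of `k`
(the paper's 1-indexed position `ℓ` corresponds to index `ℓ−1` here). -/
def bitset (k : ℕ) : Finset ℕ := (Finset.range k).filter (fun p => k.testBit p)

/-- The set `⌈κ⌉_{1:q}` of the `q` largest elements of a finite set `κ ⊆ ℕ`. -/
def topq (κ : Finset ℕ) (q : ℕ) : Finset ℕ :=
  κ.filter (fun x => (κ.filter (fun y => x < y)).card < q)

/-- `‖κ‖ = ∑_{ℓ∈κ} ℓ` in the paper's 1-indexed convention, i.e. `∑_{p∈κ} (p+1)` here. -/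
def wt (κ : Finset ℕ) : ℕ := ∑ p ∈ κ, (p + 1)

/-- `⌈κ⌉_q`: the `q`-th largest (1-indexed) element of `κ`, or `0` if `|κ| < q`. -/
noncomputable def ceilq (κ : Finset ℕ) (q : ℕ) : ℕ :=
  if q ≤ κ.card then sInf {p : ℕ | p ∈ topq κ q} + 1 else 0


lemma mem_bitset {p k : ℕ} : p ∈ bitset k ↔ k.testBit p := by
  simp only [bitset, Finset.mem_filter, Finset.mem_range, and_iff_right_iff_imp]
  intro h
  exact lt_of_lt_of_le (Nat.lt_two_pow_self (n := p)) (Nat.ge_two_pow_of_testBit h)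

lemma bitset_injective : Function.Injective bitset := by
  intro m n h
  apply Nat.eq_of_testBit_eq
  intro i
  rw [Bool.eq_iff_iff, ← mem_bitset, ← mem_bitset, h]

lemma bitset_eq_empty {n : ℕ} : bitset n = ∅ ↔ n = 0 := by
  constructor
  · intro h
    apply Nat.eq_of_testBit_eq
    intro i
    rw [Bool.eq_iff_iff, ← mem_bitset, h]
    simp [Nat.zero_testBit, ← mem_bitset]
  · rintro rfl; rfl

lemma topq_subset (κ : Finset ℕ) (q : ℕ) : topq κ q ⊆ κ := Finset.filter_subset _ _

lemma topq_of_card_le {κ : Finset ℕ} {q : ℕ} (h : κ.card ≤ q) : topq κ q = κ := by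
  rw [topq, Finset.filter_eq_self]
  intro x hx
  calc (κ.filter (fun y => x < y)).card ≤ (κ.erase x).card := by
        apply Finset.card_le_card
        intro y hy
        rw [Finset.mem_filter] at hy
        exact Finset.mem_erase.2 ⟨ne_of_gt hy.2, hy.1⟩
    _ < κ.card := Finset.card_erase_lt_of_mem hx
    _ ≤ q := h

lemma lt_of_not_mem_topq {κ : Finset ℕ} {q x z : ℕ} (hx : x ∈ κ) (hxn : x ∉ topq κ q)
    (hz : z ∈ topq κ q) : x < z := by
  rw [topq, Finset.mem_filter] at hxn hz
  by_contra hle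
  push_neg at hle  -- z ≤ x
  apply hxn
  refine ⟨hx, lt_of_le_of_lt ?_ hz.2⟩
  apply Finset.card_le_card
  intro y hy
  rw [Finset.mem_filter] at hy ⊢
  exact ⟨hy.1, lt_of_le_of_lt hle hy.2⟩

lemma card_topq {κ : Finset ℕ} {q : ℕ} (h : q ≤ κ.card) : (topq κ q).card = q := by
  rcases Nat.eq_zero_or_pos q with rfl | hq
  · simp [topq, Finset.filter_eq_empty_iff]
  have hκ : κ.Nonempty := Finset.card_pos.1 (lt_of_lt_of_le hq h)
  have htopne : (topq κ q).Nonempty := by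
    refine ⟨κ.max' hκ, ?_⟩
    rw [topq, Finset.mem_filter]
    refine ⟨κ.max'_mem hκ, ?_⟩
    have : (κ.filter (fun y => κ.max' hκ < y)) = ∅ := by
      rw [Finset.filter_eq_empty_iff]
      intro y hy
      exact not_lt_of_ge (κ.le_max' y hy)
    rw [this]; simpa using hq
  have hle : (topq κ q).card ≤ q := by
    set m := (topq κ q).min' htopne with hm
    have hmmem : m ∈ topq κ q := (topq κ q).min'_mem htopne
    have hrank : ((κ.filter (fun y => m < y)).card < q) := by
      rw [topq, Finset.mem_filter] at hmmem; exact hmmem.2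
    have hsub : (topq κ q).erase m ⊆ κ.filter (fun y => m < y) := by
      intro y hy
      rw [Finset.mem_erase] at hy
      rw [Finset.mem_filter]
      refine ⟨topq_subset _ _ hy.2, lt_of_le_of_ne ((topq κ q).min'_le y hy.2) (Ne.symm hy.1)⟩
    have := Finset.card_le_card hsub
    rw [Finset.card_erase_of_mem hmmem] at this
    omega
  have hge : q ≤ (topq κ q).card := by
    by_cases hrest : (κ \ topq κ q) = ∅
    · have : κ ⊆ topq κ q := by
        intro y hy
        by_contra hyn
        exact (Finset.eq_empty_iff_forall_notMem.1 hrest y) (Finset.mem_sdiff.2 ⟨hy, hyn⟩)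
      calc q ≤ κ.card := h
        _ ≤ (topq κ q).card := Finset.card_le_card this
    · have hrne : (κ \ topq κ q).Nonempty := Finset.nonempty_of_ne_empty hrest
      set x := (κ \ topq κ q).max' hrne with hx
      have hxmem : x ∈ κ \ topq κ q := (κ \ topq κ q).max'_mem hrne
      rw [Finset.mem_sdiff] at hxmem
      have hrank : q ≤ (κ.filter (fun y => x < y)).card := by
        by_contra hlt
        push_neg at hlt
        exact hxmem.2 (by rw [topq, Finset.mem_filter]; exact ⟨hxmem.1, hlt⟩)
      refine le_trans hrank (Finset.card_le_card ?_)
      intro y hy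
      rw [Finset.mem_filter] at hy
      by_contra hyn
      have : y ∈ κ \ topq κ q := Finset.mem_sdiff.2 ⟨hy.1, hyn⟩
      exact not_lt_of_ge ((κ \ topq κ q).le_max' y this) hy.2
  omega



lemma geomFinset {y : ℝ} (h0 : 0 ≤ y) (h1 : y < 1) (P : Finset ℕ) (c : ℕ)
    (hP : ∀ p ∈ P, c ≤ p) : ∑ p ∈ P, y ^ (p + 1) ≤ y ^ (c + 1) / (1 - y) := by
  have h1y : (0:ℝ) < 1 - y := by linarith
  set N := (P.sup id) + 1 with hN
  have hsub : P ⊆ Finset.Ico c N := by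
    intro p hp
    exact Finset.mem_Ico.2 ⟨hP p hp, Nat.lt_succ_of_le (Finset.le_sup (f := id) hp)⟩
  calc ∑ p ∈ P, y ^ (p + 1) ≤ ∑ p ∈ Finset.Ico c N, y ^ (p + 1) :=
        Finset.sum_le_sum_of_subset_of_nonneg hsub (fun i _ _ => pow_nonneg h0 _)
    _ = y * ∑ p ∈ Finset.Ico c N, y ^ p := by
        rw [Finset.mul_sum]; exact Finset.sum_congr rfl (fun p _ => by ring)
    _ ≤ y * (y ^ c / (1 - y)) := by
        apply mul_le_mul_of_nonneg_left _ h0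
        rcases le_or_gt c N with hcN | hcN
        · rw [geom_sum_Ico (ne_of_lt h1) hcN,
            show (y^N - y^c)/(y-1) = (y^c - y^N)/(1-y) by rw [← neg_div_neg_eq]; ring_nf]
          rw [div_le_div_iff₀ h1y h1y]
          have hyN : (0:ℝ) ≤ y ^ N := pow_nonneg h0 _
          nlinarith
        · rw [Finset.Ico_eq_empty (by omega)]
          simp only [Finset.sum_empty]
          positivity
    _ = y ^ (c + 1) / (1 - y) := by rw [pow_succ]; ring

lemma crux {x : ℝ} (hx0 : 0 < x) (hx1 : x < 1) :
    ∀ (a : ℕ) (c : ℕ) (G : Finset (Finset ℕ)),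
    (∀ κ ∈ G, κ.card = a ∧ ∀ p ∈ κ, c ≤ p) →
    ∑ κ ∈ G, x ^ (wt κ) ≤ (1 / (Nat.factorial a)) * (x ^ (c + 1) / (1 - x)) ^ a := by
  have h1x : (0:ℝ) < 1 - x := by linarith
  intro a
  induction a with
  | zero =>
    intro c G hG
    have hsub : G ⊆ {∅} := by
      intro κ hκ
      rw [Finset.mem_singleton]
      exact Finset.card_eq_zero.1 (hG κ hκ).1
    calc ∑ κ ∈ G, x ^ (wt κ) ≤ ∑ κ ∈ ({∅} : Finset (Finset ℕ)), x ^ (wt κ) :=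
          Finset.sum_le_sum_of_subset_of_nonneg hsub (fun i _ _ => pow_nonneg hx0.le _)
      _ = 1 := by simp [wt]
      _ = _ := by norm_num
  | succ a ih =>
    intro c G hG
    classical
    set mn : Finset ℕ → ℕ := fun κ => sInf (↑κ : Set ℕ) with hmn
    have hmnmem : ∀ κ ∈ G, mn κ ∈ κ := by
      intro κ hκ
      have hne : (↑κ : Set ℕ).Nonempty := by
        rw [Finset.coe_nonempty, ← Finset.card_pos, (hG κ hκ).1]; omega
      exact Nat.sInf_mem hne
    rw [← Finset.sum_fiberwise_of_maps_to
      (g := mn) (t := G.image mn) (fun κ hκ => Finset.mem_image_of_mem _ hκ)]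
    have hterm : ∀ p ∈ G.image mn,
        ∑ κ ∈ G.filter (fun κ => mn κ = p), x ^ (wt κ)
          ≤ (x ^ a / ((Nat.factorial a) * (1 - x) ^ a)) * (x ^ (a+1)) ^ (p+1) := by
      intro p hp
      have hinner : ∑ κ ∈ G.filter (fun κ => mn κ = p), x ^ (wt κ)
          = x ^ (p+1) * ∑ κ ∈ (G.filter (fun κ => mn κ = p)).image (fun κ => κ.erase p),
              x ^ (wt κ) := by
        rw [Finset.sum_image, Finset.mul_sum]
        · apply Finset.sum_congr rfl
          intro κ hκ
          rw [Finset.mem_filter] at hκ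
          have hpκ : p ∈ κ := hκ.2 ▸ hmnmem κ hκ.1
          rw [← pow_add]
          congr 1
          simp only [wt]
          exact (Finset.add_sum_erase κ (fun q => q + 1) hpκ).symm
        · intro κ₁ h₁ κ₂ h₂ he
          rw [Finset.mem_coe, Finset.mem_filter] at h₁ h₂
          have hp₁ : p ∈ κ₁ := h₁.2 ▸ hmnmem κ₁ h₁.1
          have hp₂ : p ∈ κ₂ := h₂.2 ▸ hmnmem κ₂ h₂.1
          rw [← Finset.insert_erase hp₁, ← Finset.insert_erase hp₂, show κ₁.erase p = κ₂.erase p from he]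
      rw [hinner]
      have hIH := ih (p+1) ((G.filter (fun κ => mn κ = p)).image (fun κ => κ.erase p)) ?_
      · calc x ^ (p+1) * ∑ κ ∈ _, x ^ (wt κ)
            ≤ x ^ (p+1) * ((1 / (Nat.factorial a)) * (x ^ (p+2) / (1 - x)) ^ a) := by
              apply mul_le_mul_of_nonneg_left _ (pow_nonneg hx0.le _)
              convert hIH using 4 <;> omega
          _ = (x ^ a / ((Nat.factorial a) * (1 - x) ^ a)) * (x ^ (a+1)) ^ (p+1) := by
              rw [div_pow, ← pow_mul, ← pow_mul]
              have hfac : (0:ℝ) < (Nat.factorial a : ℝ) := by positivity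
              field_simp
              rw [← pow_add, ← pow_add]
              congr 1
              ring
      · intro κ hκ
        rw [Finset.mem_image] at hκ
        obtain ⟨κ₀, hκ₀, rfl⟩ := hκ
        rw [Finset.mem_filter] at hκ₀
        have hpκ : p ∈ κ₀ := hκ₀.2 ▸ hmnmem κ₀ hκ₀.1
        constructor
        · rw [Finset.card_erase_of_mem hpκ, (hG κ₀ hκ₀.1).1]
          omega
        · intro q hq
          rw [Finset.mem_erase] at hq
          have : mn κ₀ ≤ q := Nat.sInf_le hq.2
          omega
    calc ∑ p ∈ G.image mn, ∑ κ ∈ G.filter (fun κ => mn κ = p), x ^ (wt κ)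
        ≤ ∑ p ∈ G.image mn, (x ^ a / ((Nat.factorial a) * (1 - x) ^ a)) * (x ^ (a+1)) ^ (p+1) :=
          Finset.sum_le_sum hterm
      _ = (x ^ a / ((Nat.factorial a) * (1 - x) ^ a)) * ∑ p ∈ G.image mn, (x ^ (a+1)) ^ (p+1) := by
          rw [Finset.mul_sum]
      _ ≤ (x ^ a / ((Nat.factorial a) * (1 - x) ^ a)) * ((x ^ (a+1)) ^ (c+1) / (1 - x ^ (a+1))) := by
          apply mul_le_mul_of_nonneg_left _ (by positivity)
          apply geomFinset (by positivity) (pow_lt_one₀ hx0.le hx1 (by omega))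
          intro p hp
          rw [Finset.mem_image] at hp
          obtain ⟨κ₀, hκ₀, rfl⟩ := hp
          exact (hG κ₀ hκ₀).2 _ (hmnmem κ₀ hκ₀)
      _ ≤ (1 / (Nat.factorial (a+1))) * (x ^ (c + 1) / (1 - x)) ^ (a+1) := by
          have hy1 : x ^ (a+1) < 1 := pow_lt_one₀ hx0.le hx1 (by omega)
          have hkey : ((a:ℝ)+1) * (1-x) * x ^ a ≤ 1 - x ^ (a+1) := by
            have hgeom : (1-x) * ∑ i ∈ Finset.range (a+1), x ^ i = 1 - x ^ (a+1) := by
              linear_combination -(geom_sum_mul x (a+1))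
            have hS : ((a:ℝ)+1) * x ^ a ≤ ∑ i ∈ Finset.range (a+1), x ^ i := by
              have := Finset.sum_le_sum (s := Finset.range (a+1))
                (f := fun _ => x ^ a) (g := fun i => x ^ i)
                (fun i hi => pow_le_pow_of_le_one hx0.le hx1.le
                  (Nat.le_of_lt_succ (Finset.mem_range.1 hi)))
              simpa [mul_comm] using this
            nlinarith
          have hfac : (0:ℝ) < (Nat.factorial a : ℝ) := by positivity
          have hx1y : (0:ℝ) < 1 - x ^ (a+1) := by linarith [pow_lt_one₀ hx0.le hx1 (show a+1 ≠ 0 by omega)]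
          have hfact : (Nat.factorial (a+1) : ℝ) = ((a:ℝ)+1) * (Nat.factorial a) := by
            rw [Nat.factorial_succ]; push_cast; ring
          have hA1 : (0:ℝ) < (Nat.factorial a : ℝ) * (1-x)^a * (1-x^(a+1)) :=
            mul_pos (mul_pos hfac (by positivity)) hx1y
          rw [div_pow, ← pow_mul, ← pow_mul,
            show (a+1)*(c+1) = (c+1)*(a+1) from by ring,
            one_div_mul_eq_div, div_div, div_mul_div_comm]
          rw [div_le_div_iff₀ (mul_pos (mul_pos hfac (by positivity)) hx1y) (by positivity)]
          rw [hfact, pow_succ (1-x) a]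
          nlinarith [mul_le_mul_of_nonneg_left hkey
            (mul_nonneg (mul_nonneg (pow_nonneg hx0.le ((c+1)*(a+1))) hfac.le)
              (pow_nonneg h1x.le a))]

noncomputable def minf (κ : Finset ℕ) : ℕ := sInf (↑κ : Set ℕ)

noncomputable def mintop (α : ℕ) (κ : Finset ℕ) : ℕ := minf (topq κ (α + 1))

noncomputable def cost (α : ℕ) (lam : ℝ) (n : ℕ) : ℝ :=
  (lam - 1) * (ceilq (bitset n) (α + 1) : ℝ) + (wt (topq (bitset n) (α + 1)) : ℝ)

lemma ceilq_of_card_le {κ : Finset ℕ} {α : ℕ} (h : κ.card ≤ α) : ceilq κ (α + 1) = 0 := by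
  rw [ceilq, if_neg (by omega)]

lemma cost_of_card_le {α : ℕ} {lam : ℝ} {n : ℕ} (h : (bitset n).card ≤ α) :
    cost α lam n = (wt (bitset n) : ℝ) := by
  rw [cost, ceilq_of_card_le h, topq_of_card_le (by omega)]
  simp

lemma topq_coe_nonempty {κ : Finset ℕ} {α : ℕ} (h : α + 1 ≤ κ.card) :
    (↑(topq κ (α + 1)) : Set ℕ).Nonempty := by
  rw [Finset.coe_nonempty, ← Finset.card_pos, card_topq h]; omega

lemma ceilq_of_card_ge {κ : Finset ℕ} {α : ℕ} (h : α + 1 ≤ κ.card) :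
    ceilq κ (α + 1) = mintop α κ + 1 := by
  rw [ceilq, if_pos h]
  rfl

lemma mintop_mem {κ : Finset ℕ} {α : ℕ} (h : α + 1 ≤ κ.card) :
    mintop α κ ∈ topq κ (α + 1) :=
  Nat.sInf_mem (topq_coe_nonempty h)

lemma mintop_le {κ : Finset ℕ} {α p : ℕ} (hp : p ∈ topq κ (α + 1)) : mintop α κ ≤ p :=
  Nat.sInf_le (Finset.mem_coe.2 hp)

/-- bits at positions ≥ the min of the top block are exactly the top block. -/
lemma mem_topq_iff_of_ge {κ : Finset ℕ} {α p : ℕ} (h : α + 1 ≤ κ.card)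
    (hp : mintop α κ ≤ p) : p ∈ κ ↔ p ∈ topq κ (α + 1) := by
  constructor
  · intro hpκ
    by_contra hpn
    exact absurd (lt_of_not_mem_topq hpκ hpn (mintop_mem h)) (not_lt_of_ge hp)
  · exact fun h' => topq_subset _ _ h'

lemma cost_eq_of_card_ge {α : ℕ} {lam : ℝ} {n : ℕ} (h : α + 1 ≤ (bitset n).card) :
    cost α lam n = (lam - 1) * ((mintop α (bitset n) : ℕ) + 1 : ℝ)
      + (wt (topq (bitset n) (α + 1)) : ℝ) := by
  rw [cost, ceilq_of_card_ge h]
  push_cast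
  ring

lemma erase_mintop_ge {κ : Finset ℕ} {α : ℕ} :
    ∀ p ∈ (topq κ (α+1)).erase (mintop α κ), mintop α κ + 1 ≤ p := by
  intro p hp
  rw [Finset.mem_erase] at hp
  have := mintop_le hp.2
  omega

lemma wt_split {κ : Finset ℕ} {m : ℕ} (hm : m ∈ κ) : wt κ = (m + 1) + wt (κ.erase m) := by
  simp only [wt]
  exact (Finset.add_sum_erase κ (fun q => q + 1) hm).symm

lemma wt_ge {κ : Finset ℕ} {c : ℕ} (h : ∀ p ∈ κ, c ≤ p) : κ.card * (c + 1) ≤ wt κ := by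
  rw [wt]
  calc κ.card * (c+1) = ∑ _p ∈ κ, (c+1) := by rw [Finset.sum_const, smul_eq_mul]
    _ ≤ ∑ p ∈ κ, (p+1) := Finset.sum_le_sum (fun p hp => by have := h p hp; omega)

lemma wt_erase_mintop_ge {κ : Finset ℕ} {α : ℕ} (h : α + 1 ≤ κ.card) :
    α * (mintop α κ + 2) ≤ wt ((topq κ (α+1)).erase (mintop α κ)) := by
  have hcard : ((topq κ (α+1)).erase (mintop α κ)).card = α := by
    rw [Finset.card_erase_of_mem (mintop_mem h), card_topq h]
    omega
  have := wt_ge (κ := (topq κ (α+1)).erase (mintop α κ)) (c := mintop α κ + 1)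
    erase_mintop_ge
  rw [hcard] at this
  calc α * (mintop α κ + 2) = α * (mintop α κ + 1 + 1) := by ring
    _ ≤ _ := this

lemma cost_nonneg {α : ℕ} {lam : ℝ} (hlam0 : 0 < lam) (hlam1 : lam ≤ 1) (n : ℕ) :
    0 ≤ cost α lam n := by
  by_cases h : (bitset n).card ≤ α
  · rw [cost_of_card_le h]; positivity
  · push_neg at h
    have h' : α + 1 ≤ (bitset n).card := h
    rw [cost_eq_of_card_ge h']
    have hmem : mintop α (bitset n) ∈ topq (bitset n) (α+1) := mintop_mem h'
    have hwt : (mintop α (bitset n) + 1) ≤ wt (topq (bitset n) (α+1)) := by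
      rw [wt_split hmem]; omega
    have hc : ((mintop α (bitset n) : ℝ) + 1) ≤ (wt (topq (bitset n) (α+1)) : ℝ) := by
      exact_mod_cast hwt
    nlinarith [hc, hlam0, hlam1]

lemma cost_lb {α : ℕ} {lam : ℝ} (hlam0 : 0 < lam) {n : ℕ} (h : α + 1 ≤ (bitset n).card) :
    ((α : ℝ) + lam) * ((mintop α (bitset n) : ℝ) + 1) ≤ cost α lam n := by
  rw [cost_eq_of_card_ge h]
  have hmem : mintop α (bitset n) ∈ topq (bitset n) (α+1) := mintop_mem h
  have hsplit := wt_split hmem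
  have hge := wt_erase_mintop_ge (α := α) h
  have h1 : ((α:ℝ) * ((mintop α (bitset n):ℝ) + 1) + ((mintop α (bitset n):ℝ)+1) : ℝ)
      ≤ (wt (topq (bitset n) (α+1)) : ℝ) := by
    rw [hsplit]
    push_cast
    have h2 : ((α:ℝ) * ((mintop α (bitset n):ℝ)+2)) ≤ (wt ((topq (bitset n) (α+1)).erase (mintop α (bitset n))) : ℝ) := by
      exact_mod_cast hge
    have : (0:ℝ) ≤ (α:ℝ) := Nat.cast_nonneg α
    nlinarith
  nlinarith [h1]

lemma mod_inj {α : ℕ} {n₁ n₂ : ℕ} (h₁ : α + 1 ≤ (bitset n₁).card)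
    (h₂ : α + 1 ≤ (bitset n₂).card)
    (ht : topq (bitset n₁) (α + 1) = topq (bitset n₂) (α + 1))
    (hm : n₁ % 2 ^ (mintop α (bitset n₁)) = n₂ % 2 ^ (mintop α (bitset n₂))) : n₁ = n₂ := by
  have hmm : mintop α (bitset n₁) = mintop α (bitset n₂) := by
    unfold mintop; rw [ht]
  apply Nat.eq_of_testBit_eq
  intro i
  by_cases hi : i < mintop α (bitset n₁)
  · have e₁ : (n₁ % 2 ^ (mintop α (bitset n₁))).testBit i = n₁.testBit i := by
      rw [Nat.testBit_mod_two_pow]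
      simp [hi]
    have e₂ : (n₂ % 2 ^ (mintop α (bitset n₂))).testBit i = n₂.testBit i := by
      rw [Nat.testBit_mod_two_pow]
      simp [hmm ▸ hi]
    rw [← e₁, ← e₂, hm]
  · push_neg at hi
    rw [Bool.eq_iff_iff, ← mem_bitset, ← mem_bitset,
      mem_topq_iff_of_ge h₁ hi, mem_topq_iff_of_ge h₂ (hmm ▸ hi), ht]

lemma perCoord (α : ℕ) (lam : ℝ) (hlam0 : 0 < lam) (hlam1 : lam ≤ 1)
    (T : ℝ) (hT : 0 ≤ T) (F : Finset ℕ)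
    (hF : ∀ n ∈ F, n ≠ 0 ∧ cost α lam n ≤ T) :
    ∑ n ∈ F, ((2:ℝ) ^ (-(1 / ((α:ℝ) + lam)))) ^ (cost α lam n)
      ≤ (1 / (α.factorial * ((2:ℝ) ^ (1 / ((α:ℝ) + lam)) - 1) ^ α)) * max (T / ((α:ℝ) + lam)) 1
        + ∑ a ∈ Finset.Icc 1 α, 1 / (a.factorial * ((2:ℝ) ^ (1 / ((α:ℝ) + lam)) - 1) ^ a) := by
  classical
  set β : ℝ := (α:ℝ) + lam with hβdef
  have hβ : 0 < β := by positivity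
  set x : ℝ := (2:ℝ) ^ (-(1/β)) with hxdef
  have hx0 : 0 < x := Real.rpow_pos_of_pos two_pos _
  have hx1 : x < 1 := Real.rpow_lt_one_of_one_lt_of_neg one_lt_two (neg_lt_zero.mpr (by positivity))
  have h1x : (0:ℝ) < 1 - x := by linarith
  set z : ℝ := (2:ℝ) ^ (1/β) with hzdef
  have hz1 : 1 < z := Real.one_lt_rpow_iff_of_pos two_pos |>.2 (Or.inl ⟨one_lt_two, by positivity⟩)
  have hxz : x = z⁻¹ := by rw [hxdef, hzdef, Real.rpow_neg (by norm_num)]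
  have hratio : x / (1 - x) = 1 / (z - 1) := by
    rw [hxz]
    have hz0 : z ≠ 0 := by linarith
    have hz1' : z - 1 ≠ 0 := by intro h'; have : z = 1 := by linarith
                                linarith
    field_simp
  have hterm : ∀ a : ℕ, (1:ℝ) / (a.factorial * (z - 1) ^ a) = (1 / a.factorial) * (x / (1-x)) ^ a := by
    intro a
    rw [hratio, div_pow, one_pow]
    have : (a.factorial : ℝ) ≠ 0 := by positivity
    have hz1' : (z - 1) ≠ 0 := by intro h'; have : z = 1 := by linarith
                                  linarith
    field_simp
  have hxβ : x ^ (β : ℝ) = 1/2 := by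
    rw [hxdef, ← Real.rpow_mul (by norm_num : (0:ℝ) ≤ 2)]
    have : -(1/β) * β = -1 := by field_simp
    rw [this, Real.rpow_neg_one]
    norm_num
  have hxβm : ∀ m : ℕ, x ^ (β * ((m:ℝ) + 1)) = (1/2:ℝ) ^ (m+1) := by
    intro m
    rw [Real.rpow_mul hx0.le, hxβ,
      show ((m:ℝ)+1) = (((m+1:ℕ)):ℝ) by push_cast; ring, Real.rpow_natCast]
  -- split the sum
  rw [← Finset.sum_filter_add_sum_filter_not F (fun n => (bitset n).card ≤ α)]
  have hpart1 : ∑ n ∈ F.filter (fun n => (bitset n).card ≤ α), x ^ (cost α lam n)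
      ≤ ∑ a ∈ Finset.Icc 1 α, 1 / (a.factorial * (z - 1) ^ a) := by
    set F₁ := F.filter (fun n => (bitset n).card ≤ α) with hF₁
    have hre : ∀ n ∈ F₁, x ^ (cost α lam n) = x ^ (wt (bitset n)) := by
      intro n hn
      rw [Finset.mem_filter] at hn
      rw [cost_of_card_le hn.2, Real.rpow_natCast]
    rw [Finset.sum_congr rfl hre]
    have hmaps : ∀ n ∈ F₁, (bitset n).card ∈ Finset.Icc 1 α := by
      intro n hn
      rw [Finset.mem_filter] at hn
      rw [Finset.mem_Icc]
      refine ⟨?_, hn.2⟩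
      rcases Nat.eq_zero_or_pos (bitset n).card with h0 | h1
      · exfalso
        exact (hF n hn.1).1 (bitset_eq_empty.1 (Finset.card_eq_zero.1 h0))
      · exact h1
    rw [← Finset.sum_fiberwise_of_maps_to hmaps (fun n => x ^ (wt (bitset n)))]
    apply Finset.sum_le_sum
    intro a ha
    have hinj : ∀ n₁ ∈ F₁.filter (fun n => (bitset n).card = a),
        ∀ n₂ ∈ F₁.filter (fun n => (bitset n).card = a), bitset n₁ = bitset n₂ → n₁ = n₂ :=
      fun n₁ _ n₂ _ h => bitset_injective h
    rw [show (∑ n ∈ F₁.filter (fun n => (bitset n).card = a), x ^ (wt (bitset n)))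
        = ∑ κ ∈ (F₁.filter (fun n => (bitset n).card = a)).image bitset, x ^ (wt κ)
      from (Finset.sum_image (f := fun κ => x ^ (wt κ)) hinj).symm]
    calc ∑ κ ∈ (F₁.filter (fun n => (bitset n).card = a)).image bitset, x ^ (wt κ)
        ≤ (1 / (Nat.factorial a)) * (x ^ (0 + 1) / (1 - x)) ^ a := by
          apply crux hx0 hx1 a 0
          intro κ hκ
          rw [Finset.mem_image] at hκ
          obtain ⟨n, hn, rfl⟩ := hκ
          rw [Finset.mem_filter] at hn
          exact ⟨hn.2, fun p _ => Nat.zero_le p⟩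
      _ = 1 / (a.factorial * (z - 1) ^ a) := by
          rw [hterm a, pow_one]
  have hpart2 : ∑ n ∈ F.filter (fun n => ¬ (bitset n).card ≤ α), x ^ (cost α lam n)
      ≤ (1 / (α.factorial * (z - 1) ^ α)) * max (T / β) 1 := by
    set F₂ := F.filter (fun n => ¬ (bitset n).card ≤ α) with hF₂
    have hcard : ∀ n ∈ F₂, α + 1 ≤ (bitset n).card := fun n hn => by
      rw [hF₂, Finset.mem_filter] at hn; omega
    set g : ℕ → Finset ℕ := fun n => topq (bitset n) (α+1) with hg
    set hh : Finset ℕ → ℝ := fun κ => (lam - 1) * ((minf κ : ℝ) + 1) + (wt κ : ℝ) with hhdef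
    have hmint : ∀ n, mintop α (bitset n) = minf (g n) := fun n => rfl
    have hcost : ∀ n ∈ F₂, cost α lam n = hh (g n) := by
      intro n hn
      rw [cost_eq_of_card_ge (hcard n hn)]
      rfl
    have hre : ∑ n ∈ F₂, x ^ cost α lam n = ∑ n ∈ F₂, (fun κ => x ^ hh κ) (g n) :=
      Finset.sum_congr rfl (fun n hn => by rw [hcost n hn])
    rw [hre, Finset.sum_comp (fun κ => x ^ hh κ) g]
    have hfiber : ∀ κ ∈ F₂.image g, (F₂.filter (fun n => g n = κ)).card ≤ 2 ^ (minf κ) := by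
      intro κ hκ
      calc (F₂.filter (fun n => g n = κ)).card ≤ (Finset.range (2 ^ (minf κ))).card := by
            apply Finset.card_le_card_of_injOn (fun n => n % 2 ^ (minf κ))
            · intro n hn
              exact Finset.mem_range.2 (Nat.mod_lt _ (by positivity))
            · intro n₁ h₁ n₂ h₂ he
              rw [Finset.mem_coe, Finset.mem_filter] at h₁ h₂
              apply mod_inj (hcard n₁ h₁.1) (hcard n₂ h₂.1) (by rw [show topq (bitset n₁) (α+1) = g n₁ from rfl, show topq (bitset n₂) (α+1) = g n₂ from rfl, h₁.2, h₂.2])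
              rw [hmint n₁, hmint n₂, h₁.2, h₂.2]
              exact he
        _ = 2 ^ (minf κ) := Finset.card_range _
    have hfacts : ∀ κ ∈ F₂.image g, κ.card = α + 1 ∧ minf κ ∈ κ ∧
        (∀ p ∈ κ.erase (minf κ), minf κ + 1 ≤ p) ∧ ((minf κ : ℝ) + 1 ≤ T / β) := by
      intro κ hκ
      rw [Finset.mem_image] at hκ
      obtain ⟨n, hn, rfl⟩ := hκ
      have hc := hcard n hn
      refine ⟨card_topq hc, mintop_mem hc, erase_mintop_ge, ?_⟩
      have h1 := cost_lb hlam0 (n := n) hc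
      have h2 : cost α lam n ≤ T := by
        rw [hF₂, Finset.mem_filter] at hn
        exact (hF n hn.1).2
      rw [hmint n] at h1
      rw [le_div_iff₀ hβ, mul_comm]
      exact le_trans h1 h2
    calc ∑ κ ∈ F₂.image g, (F₂.filter (fun n => g n = κ)).card • x ^ hh κ
        ≤ ∑ κ ∈ F₂.image g, (2:ℝ) ^ (minf κ) * x ^ hh κ := by
          apply Finset.sum_le_sum
          intro κ hκ
          rw [nsmul_eq_mul]
          apply mul_le_mul_of_nonneg_right _ (Real.rpow_nonneg hx0.le _)
          calc ((F₂.filter (fun n => g n = κ)).card : ℝ) ≤ ((2 ^ (minf κ) : ℕ) : ℝ) := by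
                exact_mod_cast hfiber κ hκ
            _ = (2:ℝ) ^ (minf κ) := by push_cast; ring
      _ ≤ (1 / (α.factorial * (z - 1) ^ α)) * max (T / β) 1 := by
          have hmaps2 : ∀ κ ∈ F₂.image g, minf κ ∈ Finset.range (Nat.ceil (T / β)) := by
            intro κ hκ
            refine Finset.mem_range.2 (Nat.lt_ceil.2 ?_)
            have := (hfacts κ hκ).2.2.2
            linarith
          rw [← Finset.sum_fiberwise_of_maps_to hmaps2 (fun κ => (2:ℝ) ^ (minf κ) * x ^ hh κ)]
          have hinner : ∀ m ∈ Finset.range (Nat.ceil (T / β)),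
              ∑ κ ∈ (F₂.image g).filter (fun κ => minf κ = m), (2:ℝ) ^ (minf κ) * x ^ hh κ
                ≤ (1/2) * ((1 / (α.factorial : ℝ)) * (x / (1-x)) ^ α) := by
            intro m _
            have hsummand : ∀ κ ∈ (F₂.image g).filter (fun κ => minf κ = m),
                (2:ℝ) ^ (minf κ) * x ^ hh κ
                  = ((2:ℝ) ^ m * x ^ (lam * ((m:ℝ)+1))) * x ^ (wt (κ.erase m)) := by
              intro κ hκ
              rw [Finset.mem_filter] at hκ
              obtain ⟨hcard', hmem', herase', _⟩ := hfacts κ hκ.1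
              have hm : minf κ = m := hκ.2
              have hwt : wt κ = (m + 1) + wt (κ.erase m) := by
                rw [← hm]; exact wt_split hmem'
              have hhval : hh κ = lam * ((m:ℝ)+1) + ((wt (κ.erase m) : ℕ) : ℝ) := by
                rw [hhdef]
                simp only
                rw [hm, hwt]
                push_cast
                ring
              rw [hhval, Real.rpow_add hx0, Real.rpow_natCast, hm]
              ring
            rw [Finset.sum_congr rfl hsummand, ← Finset.mul_sum]
            have hsum2 : ∑ κ ∈ (F₂.image g).filter (fun κ => minf κ = m), x ^ (wt (κ.erase m))
                ≤ (1 / (Nat.factorial α)) * (x ^ (m+1+1) / (1 - x)) ^ α := by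
              have hinj2 : ∀ κ₁ ∈ (F₂.image g).filter (fun κ => minf κ = m),
                  ∀ κ₂ ∈ (F₂.image g).filter (fun κ => minf κ = m),
                  κ₁.erase m = κ₂.erase m → κ₁ = κ₂ := by
                intro κ₁ h₁ κ₂ h₂ he
                rw [Finset.mem_filter] at h₁ h₂
                have hm₁ : m ∈ κ₁ := h₁.2 ▸ (hfacts κ₁ h₁.1).2.1
                have hm₂ : m ∈ κ₂ := h₂.2 ▸ (hfacts κ₂ h₂.1).2.1
                rw [← Finset.insert_erase hm₁, ← Finset.insert_erase hm₂, he]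
              rw [show (∑ κ ∈ (F₂.image g).filter (fun κ => minf κ = m), x ^ (wt (κ.erase m)))
                  = ∑ κ' ∈ ((F₂.image g).filter (fun κ => minf κ = m)).image (fun κ => κ.erase m), x ^ (wt κ')
                from (Finset.sum_image (f := fun κ' => x ^ (wt κ')) hinj2).symm]
              apply crux hx0 hx1 α (m+1)
              intro κ' hκ'
              rw [Finset.mem_image] at hκ'
              obtain ⟨κ, hκ, rfl⟩ := hκ'
              rw [Finset.mem_filter] at hκ
              obtain ⟨hcard', hmem', herase', _⟩ := hfacts κ hκ.1
              have hm := hκ.2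
              constructor
              · rw [← hm, Finset.card_erase_of_mem hmem', hcard']
                omega
              · intro p hp
                rw [← hm] at hp ⊢
                exact herase' p hp
            calc ((2:ℝ) ^ m * x ^ (lam * ((m:ℝ)+1))) * ∑ κ ∈ (F₂.image g).filter (fun κ => minf κ = m), x ^ (wt (κ.erase m))
                ≤ ((2:ℝ) ^ m * x ^ (lam * ((m:ℝ)+1))) * ((1 / (Nat.factorial α)) * (x ^ (m+1+1) / (1 - x)) ^ α) := by
                  apply mul_le_mul_of_nonneg_left hsum2
                  positivity
              _ = (1/2) * ((1 / (α.factorial : ℝ)) * (x / (1-x)) ^ α) := by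
                  have e1 : x ^ (lam * ((m:ℝ)+1)) * ((x:ℝ) ^ (m+2)) ^ α = (1/2:ℝ) ^ (m+1) * x ^ α := by
                    rw [← pow_mul, ← Real.rpow_natCast x ((m+2)*α), ← Real.rpow_add hx0,
                      show lam * ((m:ℝ)+1) + (((m+2)*α : ℕ) : ℝ) = β * ((m:ℝ)+1) + (α:ℝ) by
                        rw [hβdef]; push_cast; ring,
                      Real.rpow_add hx0, hxβm m, Real.rpow_natCast]
                  have h2m : (2:ℝ) ^ m * (1/2:ℝ) ^ (m+1) = 1/2 := by
                    rw [one_div, inv_pow, pow_succ]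
                    field_simp
                  calc (2:ℝ) ^ m * x ^ (lam * ((m:ℝ)+1)) * ((1 / (Nat.factorial α : ℝ)) * (x ^ (m+1+1) / (1 - x)) ^ α)
                      = ((2:ℝ) ^ m * (x ^ (lam * ((m:ℝ)+1)) * (x ^ (m+2)) ^ α)) * ((1 / (Nat.factorial α : ℝ)) * (1 / (1-x) ^ α)) := by
                        rw [div_pow]
                        ring_nf
                    _ = ((2:ℝ) ^ m * ((1/2:ℝ) ^ (m+1) * x ^ α)) * ((1 / (Nat.factorial α : ℝ)) * (1 / (1-x) ^ α)) := by
                        rw [e1]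
                    _ = ((2:ℝ) ^ m * (1/2:ℝ) ^ (m+1)) * (x ^ α * ((1 / (Nat.factorial α : ℝ)) * (1 / (1-x) ^ α))) := by
                        ring
                    _ = (1/2) * ((1 / (α.factorial : ℝ)) * (x / (1-x)) ^ α) := by
                        rw [h2m, div_pow]
                        ring
          calc ∑ m ∈ Finset.range (Nat.ceil (T / β)), ∑ κ ∈ (F₂.image g).filter (fun κ => minf κ = m), (2:ℝ) ^ (minf κ) * x ^ hh κ
              ≤ ∑ m ∈ Finset.range (Nat.ceil (T / β)), (1/2) * ((1 / (α.factorial : ℝ)) * (x / (1-x)) ^ α) :=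
                Finset.sum_le_sum hinner
            _ = (Nat.ceil (T / β) : ℝ) * ((1/2) * ((1 / (α.factorial : ℝ)) * (x / (1-x)) ^ α)) := by
                rw [Finset.sum_const, Finset.card_range, nsmul_eq_mul]
            _ ≤ (1 / (α.factorial * (z - 1) ^ α)) * max (T / β) 1 := by
                rw [hterm α]
                have hA0 : (0:ℝ) ≤ (1 / (α.factorial : ℝ)) * (x / (1-x)) ^ α := by positivity
                have htβ : (0:ℝ) ≤ T / β := by positivity
                have hceil : (Nat.ceil (T / β) : ℝ) ≤ T / β + 1 :=
                  le_of_lt (Nat.ceil_lt_add_one htβ)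
                have hmax1 : T / β ≤ max (T / β) 1 := le_max_left _ _
                have hmax2 : (1:ℝ) ≤ max (T / β) 1 := le_max_right _ _
                nlinarith
  linarith [hpart1, hpart2]

/-- Membership of `k_u` (encoded as `k : Fin s → ℕ`, with only coordinates in `u` relevant)
in `𝒦_{u,v}(T)`: `|κ_j| = α+1` on `v`, `1 ≤ |κ_j| ≤ α` on `u∖v`, and
`(λ−1)∑_{j∈u}⌈κ_j⌉_{α+1} + ∑_{j∈u}‖κ_j‖ ≤ T`. -/
def memKuv {s : ℕ} (α : ℕ) (lam T : ℝ) (u v : Finset (Fin s)) (k : Fin s → ℕ) : Prop :=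
  (∀ j ∈ v, (bitset (k j)).card = α + 1) ∧
  (∀ j ∈ u \ v, 1 ≤ (bitset (k j)).card ∧ (bitset (k j)).card ≤ α) ∧
  (lam - 1) * (∑ j ∈ u, (ceilq (bitset (k j)) (α + 1) : ℝ))
      + ∑ j ∈ u, (wt (bitset (k j)) : ℝ) ≤ T

/-- Membership of `k'` in `B(k_u, v)`: support `u`, the `α+1` largest bit positions of
`κ'_j` equal `κ_j` for `j ∈ v`, and `k'_j = k_j` for `j ∈ u∖v`. -/
def memB {s : ℕ} (α : ℕ) (u v : Finset (Fin s)) (k k' : Fin s → ℕ) : Prop :=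
  (∀ j, k' j ≠ 0 ↔ j ∈ u) ∧
  (∀ j ∈ v, topq (bitset (k' j)) (α + 1) = bitset (k j)) ∧
  (∀ j ∈ u \ v, k' j = k j)


lemma sum_cost_le {s α : ℕ} {lam T : ℝ} {u v : Finset (Fin s)} {k k' : Fin s → ℕ}
    (hK : memKuv α lam T u v k) (hB : memB α u v k k') :
    ∑ j ∈ u, cost α lam (k' j) ≤ T := by
  have hKc := hK.2.2
  rw [Finset.mul_sum, ← Finset.sum_add_distrib] at hKc
  refine le_trans (le_of_eq (Finset.sum_congr rfl ?_)) hKc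
  intro j hj
  by_cases hjv : j ∈ v
  · have htop := hB.2.1 j hjv
    have hcardk : (bitset (k j)).card = α + 1 := hK.1 j hjv
    have hcard' : α + 1 ≤ (bitset (k' j)).card := by
      calc α + 1 = (topq (bitset (k' j)) (α+1)).card := by rw [htop, hcardk]
        _ ≤ _ := Finset.card_le_card (topq_subset _ _)
    rw [cost_eq_of_card_ge hcard', ceilq_of_card_ge (le_of_eq hcardk.symm), htop]
    have hmm : mintop α (bitset (k' j)) = mintop α (bitset (k j)) := by
      unfold mintop
      rw [show topq (bitset (k' j)) (α+1) = bitset (k j) from htop,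
        topq_of_card_le (le_of_eq hcardk)]
    rw [hmm]
    push_cast
    ring
  · have hjuv : j ∈ u \ v := Finset.mem_sdiff.2 ⟨hj, hjv⟩
    rw [hB.2.2 j hjuv, cost_of_card_le (hK.2.1 j hjuv).2, ceilq_of_card_le (hK.2.1 j hjuv).2]
    push_cast
    ring

lemma cost_ge_bit {α : ℕ} {lam : ℝ} (hlam0 : 0 < lam) (hlam1 : lam ≤ 1) {n p : ℕ}
    (hp : p ∈ bitset n) : lam * ((p:ℝ) + 1) ≤ cost α lam n := by
  by_cases h : (bitset n).card ≤ α
  · rw [cost_of_card_le h]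
    have h1 : (p + 1) ≤ wt (bitset n) := by rw [wt_split hp]; omega
    have h2 : ((p:ℝ) + 1) ≤ (wt (bitset n) : ℝ) := by exact_mod_cast h1
    nlinarith
  · push_neg at h
    have h' : α + 1 ≤ (bitset n).card := h
    rw [cost_eq_of_card_ge h']
    have hmem : mintop α (bitset n) ∈ topq (bitset n) (α+1) := mintop_mem h'
    set m := mintop α (bitset n) with hmdef
    by_cases hpm : p ≤ m
    · have hwt : m + 1 ≤ wt (topq (bitset n) (α+1)) := by rw [wt_split hmem]; omega
      have hwt' : ((m:ℝ) + 1) ≤ (wt (topq (bitset n) (α+1)) : ℝ) := by exact_mod_cast hwt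
      have hpm' : ((p:ℝ) + 1) ≤ ((m:ℝ) + 1) := by
        have : (p:ℝ) ≤ (m:ℝ) := by exact_mod_cast hpm
        linarith
      nlinarith
    · push_neg at hpm
      have hptop : p ∈ topq (bitset n) (α+1) := (mem_topq_iff_of_ge h' (by omega)).1 hp
      have hpe : p ∈ (topq (bitset n) (α+1)).erase m :=
        Finset.mem_erase.2 ⟨by omega, hptop⟩
      have hwt : (m + 1) + (p + 1) ≤ wt (topq (bitset n) (α+1)) := by
        rw [wt_split hmem, wt_split hpe]
        omega
      have hwt' : ((m:ℝ) + 1) + ((p:ℝ) + 1) ≤ (wt (topq (bitset n) (α+1)) : ℝ) := by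
        exact_mod_cast hwt
      have hm0 : (0:ℝ) ≤ (m:ℝ) := Nat.cast_nonneg m
      have hp0 : (0:ℝ) ≤ (p:ℝ) := Nat.cast_nonneg p
      nlinarith

lemma lt_of_cost_le {α : ℕ} {lam T : ℝ} (hlam0 : 0 < lam) (hlam1 : lam ≤ 1) {n : ℕ}
    (hc : cost α lam n ≤ T) : n < 2 ^ (Nat.ceil (T / lam)) := by
  set M := Nat.ceil (T / lam) with hM
  have hbits : ∀ p, p ∈ bitset n → p < M := by
    intro p hp
    have h1 := cost_ge_bit (α := α) hlam0 hlam1 hp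
    have h2 : lam * ((p:ℝ) + 1) ≤ T := le_trans h1 hc
    have h3 : (p:ℝ) < T / lam := by
      rw [lt_div_iff₀ hlam0]
      nlinarith
    exact Nat.lt_ceil.2 h3
  have heq : n = n % 2 ^ M := by
    apply Nat.eq_of_testBit_eq
    intro i
    rw [Nat.testBit_mod_two_pow]
    by_cases hi : i < M
    · simp [hi]
    · rw [decide_eq_false hi, Bool.false_and]
      cases hb : n.testBit i
      · rfl
      · exact absurd (hbits i (mem_bitset.2 hb)) hi
  rw [heq]
  exact Nat.mod_lt _ (by positivity)


/-- Lemma 6 of the paper: for every `T ≥ 0` and nonempty `u`, with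
`A = 1/(α!(2^{1/(α+λ)}−1)^α)` and `B = ∑_{α'=1}^α 1/(α'!(2^{1/(α+λ)}−1)^{α'})`,
`|K_u(T)| ≤ 2^{T/(α+λ)} (A·max(T/(α+λ),1) + B)^{|u|}`, where
`K_u(T) = ⋃_{v⊆u} ⋃_{k_u∈𝒦_{u,v}(T)} B(k_u,v)`. -/
theorem stmt16 (s α : ℕ) (lam : ℝ) (hlam0 : 0 < lam) (hlam1 : lam ≤ 1)
    (u : Finset (Fin s)) (hu : u.Nonempty) (T : ℝ) (hT : 0 ≤ T)
    (A B : ℝ)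
    (hA : A = 1 / (α.factorial * ((2:ℝ) ^ (1 / ((α:ℝ) + lam)) - 1) ^ α))
    (hB : B = ∑ a ∈ Finset.Icc 1 α,
        1 / (a.factorial * ((2:ℝ) ^ (1 / ((α:ℝ) + lam)) - 1) ^ a)) :
    (Nat.card {k' : Fin s → ℕ // ∃ v ⊆ u, ∃ k : Fin s → ℕ,
        memKuv α lam T u v k ∧ memB α u v k k'} : ℝ)
      ≤ (2:ℝ) ^ (T / ((α:ℝ) + lam)) * (A * max (T / ((α:ℝ) + lam)) 1 + B) ^ u.card := by
  classical
  have hβ : (0:ℝ) < (α:ℝ) + lam := by positivity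
  set x : ℝ := (2:ℝ) ^ (-(1 / ((α:ℝ) + lam))) with hxdef
  have hx0 : 0 < x := Real.rpow_pos_of_pos two_pos _
  have hx1 : x < 1 := Real.rpow_lt_one_of_one_lt_of_neg one_lt_two (neg_lt_zero.mpr (by positivity))
  set P : (Fin s → ℕ) → Prop := fun k' => ∃ v ⊆ u, ∃ k : Fin s → ℕ,
      memKuv α lam T u v k ∧ memB α u v k k' with hP
  -- the two key consequences of membership
  have hconseq : ∀ k', P k' → (∀ j, k' j ≠ 0 ↔ j ∈ u) ∧ ∑ j ∈ u, cost α lam (k' j) ≤ T := by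
    rintro k' ⟨v, hvu, k, hK, hBm⟩
    exact ⟨hBm.1, sum_cost_le hK hBm⟩
  have hcoordT : ∀ k', P k' → ∀ j ∈ u, cost α lam (k' j) ≤ T := by
    intro k' hk' j hj
    refine le_trans (Finset.single_le_sum (f := fun j => cost α lam (k' j))
      (fun i _ => cost_nonneg hlam0 hlam1 _) hj) (hconseq k' hk').2
  -- finiteness
  have hfin : {k' : Fin s → ℕ | P k'}.Finite := by
    apply Set.Finite.subset (Set.Finite.pi (fun j : Fin s =>
      Set.finite_Iio (2 ^ (Nat.ceil (T / lam)))))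
    intro k' hk'
    simp only [Set.mem_pi, Set.mem_univ, Set.mem_Iio, forall_true_left]
    intro j
    by_cases hj : j ∈ u
    · exact lt_of_cost_le hlam0 hlam1 (hcoordT k' hk' j hj)
    · have h0 : k' j = 0 := by
        by_contra h
        exact hj (((hconseq k' hk').1 j).1 h)
      rw [h0]
      positivity
  set S' : Finset (Fin s → ℕ) := hfin.toFinset with hS'
  have hmemS' : ∀ k', k' ∈ S' ↔ P k' := fun k' => Set.Finite.mem_toFinset hfin
  have hcardeq : (Nat.card {k' : Fin s → ℕ // P k'} : ℝ) = (S'.card : ℝ) := by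
    have h := Nat.card_eq_card_finite_toFinset hfin
    have h2 : Nat.card {k' : Fin s → ℕ // P k'} = S'.card := h
    exact_mod_cast h2
  have hw0 : ∀ n, (0:ℝ) ≤ x ^ cost α lam n := fun n => Real.rpow_nonneg hx0.le _
  have hone : ∀ k' ∈ S', (1:ℝ) ≤ (2:ℝ) ^ (T / ((α:ℝ) + lam)) * ∏ j ∈ u, x ^ cost α lam (k' j) := by
    intro k' hk'
    have hsum := (hconseq k' ((hmemS' k').1 hk')).2
    have hprod : ∏ j ∈ u, x ^ cost α lam (k' j) = x ^ (∑ j ∈ u, cost α lam (k' j)) := by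
      simp only [Real.rpow_def_of_pos hx0]
      rw [← Real.exp_sum, ← Finset.mul_sum]
    rw [hprod]
    have h1 : x ^ T ≤ x ^ (∑ j ∈ u, cost α lam (k' j)) :=
      Real.rpow_le_rpow_of_exponent_ge hx0 hx1.le hsum
    have h2 : (2:ℝ) ^ (T / ((α:ℝ) + lam)) * x ^ T = 1 := by
      rw [hxdef, ← Real.rpow_mul (by norm_num : (0:ℝ) ≤ 2), ← Real.rpow_add two_pos,
        show T / ((α:ℝ) + lam) + (-(1 / ((α:ℝ) + lam))) * T = 0 by field_simp; ring,
        Real.rpow_zero]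
    calc (1:ℝ) = (2:ℝ) ^ (T / ((α:ℝ) + lam)) * x ^ T := h2.symm
      _ ≤ _ := mul_le_mul_of_nonneg_left h1 (Real.rpow_pos_of_pos two_pos _).le
  have hstep1 : (S'.card : ℝ)
      ≤ (2:ℝ) ^ (T / ((α:ℝ) + lam)) * ∑ k' ∈ S', ∏ j ∈ u, x ^ cost α lam (k' j) := by
    rw [Finset.mul_sum]
    calc (S'.card : ℝ) = ∑ _k' ∈ S', (1:ℝ) := by
          rw [Finset.sum_const, nsmul_eq_mul, mul_one]
      _ ≤ _ := Finset.sum_le_sum hone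
  set Fj : Fin s → Finset ℕ := fun j => S'.image (fun k' => k' j) with hFj
  have hstep2 : ∑ k' ∈ S', ∏ j ∈ u, x ^ cost α lam (k' j)
      ≤ ∏ j ∈ u, ∑ n ∈ Fj j, x ^ cost α lam n := by
    rw [Finset.prod_sum]
    set ι : (Fin s → ℕ) → (∀ j : Fin s, j ∈ u → ℕ) := fun k' => fun j _ => k' j with hι
    have hιinj : ∀ k₁ ∈ S', ∀ k₂ ∈ S', ι k₁ = ι k₂ → k₁ = k₂ := by
      intro k₁ h₁ k₂ h₂ he
      funext j
      by_cases hj : j ∈ u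
      · exact congrFun (congrFun he j) hj
      · have e₁ : k₁ j = 0 := by
          by_contra hne; exact hj (((hconseq _ ((hmemS' _).1 h₁)).1 j).1 hne)
        have e₂ : k₂ j = 0 := by
          by_contra hne; exact hj (((hconseq _ ((hmemS' _).1 h₂)).1 j).1 hne)
        rw [e₁, e₂]
    calc ∑ k' ∈ S', ∏ j ∈ u, x ^ cost α lam (k' j)
        = ∑ p ∈ S'.image ι, ∏ j ∈ u.attach, x ^ cost α lam (p j.1 j.2) := by
          rw [Finset.sum_image (f := fun p => ∏ j ∈ u.attach, x ^ cost α lam (p j.1 j.2)) hιinj]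
          exact Finset.sum_congr rfl
            (fun k' _ => (Finset.prod_attach u (fun j => x ^ cost α lam (k' j))).symm)
      _ ≤ ∑ p ∈ u.pi Fj, ∏ j ∈ u.attach, x ^ cost α lam (p j.1 j.2) := by
          apply Finset.sum_le_sum_of_subset_of_nonneg
          · intro p hp
            rw [Finset.mem_image] at hp
            obtain ⟨k', hk', rfl⟩ := hp
            rw [Finset.mem_pi]
            intro j hj
            exact Finset.mem_image_of_mem _ hk'
          · intro p _ _
            exact Finset.prod_nonneg (fun j _ => hw0 _)
  have hsum_nonneg : ∀ j ∈ u, (0:ℝ) ≤ ∑ n ∈ Fj j, x ^ cost α lam n :=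
    fun j _ => Finset.sum_nonneg (fun n _ => hw0 n)
  have hstep3 : ∀ j ∈ u, ∑ n ∈ Fj j, x ^ cost α lam n
      ≤ A * max (T / ((α:ℝ) + lam)) 1 + B := by
    intro j hj
    rw [hA, hB]
    apply perCoord α lam hlam0 hlam1 T hT
    intro n hn
    rw [Finset.mem_image] at hn
    obtain ⟨k', hk', rfl⟩ := hn
    have hPk := (hmemS' k').1 hk'
    exact ⟨((hconseq k' hPk).1 j).2 hj, hcoordT k' hPk j hj⟩
  rw [hcardeq]
  calc (S'.card : ℝ)
      ≤ (2:ℝ) ^ (T / ((α:ℝ) + lam)) * ∑ k' ∈ S', ∏ j ∈ u, x ^ cost α lam (k' j) := hstep1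
    _ ≤ (2:ℝ) ^ (T / ((α:ℝ) + lam)) * ∏ j ∈ u, ∑ n ∈ Fj j, x ^ cost α lam n :=
        mul_le_mul_of_nonneg_left hstep2 (Real.rpow_pos_of_pos two_pos _).le
    _ ≤ (2:ℝ) ^ (T / ((α:ℝ) + lam)) * ∏ j ∈ u, (A * max (T / ((α:ℝ) + lam)) 1 + B) := by
        apply mul_le_mul_of_nonneg_left _ (Real.rpow_pos_of_pos two_pos _).le
        exact Finset.prod_le_prod hsum_nonneg hstep3
    _ = (2:ℝ) ^ (T / ((α:ℝ) + lam)) * (A * max (T / ((α:ℝ) + lam)) 1 + B) ^ u.card := by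
        rw [Finset.prod_const]
end
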